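/- Fix an integer m ≥ 1 and a free group F. Define a relation on the set of pairs {(x, y) ∈ F × F : y ≠ 1} by: (x₁, y₁) ∼ (x₂, y₂) if and only if y₁*y₂ = y₂*y₁ and there exists y ∈ F with y*y₁ = y₁*y and x₁*x₂⁻¹ = y^m. Then ∼ is an equivalence relation. -/

import Mathlib

/-!
Commutation is transitive on the nontrivial elements of a free group: if `b ≠ 1` commutes with
`a` and `c`, then `a` and `c` lie in the centralizer of `b`, which is free by Nielsen–Schreier and
has `b` in its center. A free group on at least two generators has trivial center (conjugating a
nontrivial reduced word by a suitable letter lengthens it), so that centralizer is free on at most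
one generator, hence commutative. Symmetry and transitivity of the relation follow, with `y⁻¹` and
`y * z` as witnesses.
-/

namespace FreeGroup

variable {α : Type*}

theorem IsReduced.cons_append_singleton {L : List (α × Bool)} (hL : IsReduced L) (hne : L ≠ [])
    {a b : α × Bool} (ha : ∀ c ∈ L.head?, a.1 = c.1 → a.2 = c.2)
    (hb : ∀ c ∈ L.getLast?, c.1 = b.1 → c.2 = b.2) : IsReduced (a :: L ++ [b]) := by
  refine List.IsChain.cons (hL.append (List.isChain_singleton b) ?_) ?_
  · simpa using hb
  · obtain ⟨c, L', rfl⟩ := List.exists_cons_of_ne_nil hne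
    simpa using ha

theorem eq_one_of_mem_center {x y : α} (hxy : x ≠ y) {z : FreeGroup α}
    (hz : z ∈ Subgroup.center (FreeGroup α)) : z = 1 := by
  classical
  by_contra hz1
  have hne : z.toWord ≠ [] := mt toWord_eq_nil_iff.mp hz1
  set first := z.toWord.head hne
  set last := z.toWord.getLast hne
  -- conjugate by a letter that cannot cancel against either end of the reduced word of `z`
  obtain ⟨g, hg⟩ : ∃ g, g ≠ last.1 := by
    by_cases h : last.1 = x
    · exact ⟨y, h ▸ hxy.symm⟩
    · exact ⟨x, Ne.symm h⟩
  have hred : IsReduced ((g, first.2) :: z.toWord ++ [(g, !first.2)]) :=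
    isReduced_toWord.cons_append_singleton hne
      (by simp [List.head?_eq_some_head hne, first])
      (by simp [List.getLast?_eq_some_getLast hne, last, Ne.symm hg])
  have hconj : mk [(g, first.2)] * z * (mk [(g, first.2)])⁻¹ = z := by
    rw [Subgroup.mem_center_iff.mp hz, mul_inv_cancel_right]
  have hword : (mk [(g, first.2)] * z * (mk [(g, first.2)])⁻¹).toWord =
      (g, first.2) :: z.toWord ++ [(g, !first.2)] := by
    conv_lhs => rw [← mk_toWord (x := z)]
    rw [inv_mk, mul_mk, mul_mk, toWord_mk]
    simpa [invRev] using hred.reduce_eq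
  have hlen := congrArg List.length (hconj ▸ hword)
  simp only [List.length_append, List.length_cons, List.length_nil] at hlen
  omega

theorem commute_of_subsingleton [Subsingleton α] (b c : FreeGroup α) : Commute b c := by
  have hgen : ∀ g ∈ Set.range (of : α → FreeGroup α), ∀ h ∈ Set.range (of : α → FreeGroup α),
      g * h = h * g := by
    rintro _ ⟨x, rfl⟩ _ ⟨y, rfl⟩
    rw [Subsingleton.elim x y]
  have hmem : ∀ w : FreeGroup α, w ∈ Subgroup.centralizer (Set.centralizer (Set.range of)) :=
    fun w => Subgroup.closure_le_centralizer_centralizer _ (by simp)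
  exact Set.centralizer_centralizer_comm_of_comm hgen b (hmem b) c (hmem c)

theorem commute_of_mem_center {z : FreeGroup α} (hz : z ∈ Subgroup.center (FreeGroup α))
    (hz1 : z ≠ 1) (b c : FreeGroup α) : Commute b c := by
  by_cases h : ∃ x y : α, x ≠ y
  · obtain ⟨x, y, hxy⟩ := h
    exact absurd (eq_one_of_mem_center hxy hz) hz1
  · have : Subsingleton α := ⟨by simpa using h⟩
    exact commute_of_subsingleton b c

end FreeGroup

theorem IsFreeGroup.commute_of_mem_center {G : Type*} [Group G] [IsFreeGroup G] {z : G}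
    (hz : z ∈ Subgroup.center G) (hz1 : z ≠ 1) (b c : G) : Commute b c := by
  let e := IsFreeGroup.toFreeGroup G
  have hez : e z ∈ Subgroup.center (FreeGroup (IsFreeGroup.Generators G)) :=
    Subgroup.mem_center_iff.mpr fun g => by
      simpa using congrArg e (Subgroup.mem_center_iff.mp hz (e.symm g))
  simpa using (FreeGroup.commute_of_mem_center hez (by simpa using hz1) (e b) (e c)).map e.symm

theorem FreeGroup.commute_trans {α : Type*} {a b c : FreeGroup α} (hb : b ≠ 1)
    (hab : Commute a b) (hbc : Commute b c) : Commute a c := by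
  let H := Subgroup.centralizer {b}
  have hbH : (⟨b, Subgroup.mem_centralizer_singleton_iff.mpr rfl⟩ : H) ∈ Subgroup.center H := by
    rw [Subgroup.mem_center_iff]
    rintro ⟨g, hg⟩
    exact Subtype.ext (Subgroup.mem_centralizer_singleton_iff.mp hg)
  have := IsFreeGroup.commute_of_mem_center hbH (by simpa using hb)
    ⟨a, Subgroup.mem_centralizer_singleton_iff.mpr hab.eq⟩
    ⟨c, Subgroup.mem_centralizer_singleton_iff.mpr hbc.eq.symm⟩
  simpa using this.map H.subtype

theorem freeGroup_right_coset_equivalence_general {α : Type*} (m : ℤ) :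
    Equivalence (fun (p q : {p : FreeGroup α × FreeGroup α // p.2 ≠ 1}) =>
      p.1.2 * q.1.2 = q.1.2 * p.1.2 ∧
        ∃ y : FreeGroup α, y * p.1.2 = p.1.2 * y ∧ p.1.1 * (q.1.1)⁻¹ = y ^ m) := by
  refine ⟨fun p => ⟨rfl, 1, by simp, by simp⟩, ?_, ?_⟩
  · rintro p q ⟨hpq, y, hyp, hx⟩
    have hyq : Commute y q.1.2 := FreeGroup.commute_trans p.2 hyp hpq
    exact ⟨hpq.symm, y⁻¹, hyq.inv_left, by rw [inv_zpow, ← hx, mul_inv_rev, inv_inv]⟩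
  · rintro p q r ⟨hpq, y, hyp, hx⟩ ⟨hqr, z, hzq, hx'⟩
    have hzp : Commute z p.1.2 := FreeGroup.commute_trans q.2 hzq (Commute.symm hpq)
    have hyz : Commute y z := FreeGroup.commute_trans p.2 hyp hzp.symm
    refine ⟨FreeGroup.commute_trans q.2 hpq hqr, y * z, Commute.mul_left hyp hzp, ?_⟩
    calc p.1.1 * r.1.1⁻¹ = (p.1.1 * q.1.1⁻¹) * (q.1.1 * r.1.1⁻¹) := by group
      _ = (y * z) ^ m := by rw [hx, hx', hyz.mul_zpow]

theorem freeGroup_right_coset_equivalence {α : Type*} (m : ℤ) (hm : 1 ≤ m) :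
    Equivalence (fun (p q : {p : FreeGroup α × FreeGroup α // p.2 ≠ 1}) =>
      p.1.2 * q.1.2 = q.1.2 * p.1.2 ∧
        ∃ y : FreeGroup α, y * p.1.2 = p.1.2 * y ∧ p.1.1 * (q.1.1)⁻¹ = y ^ m) :=
  freeGroup_right_coset_equivalence_general m
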